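/- For every nonnegative integer z and nonnegative integer n, the coefficient G_n^{(z)} of x^n/n! in the formal power series ((1/2) x^2/(e^x - x - 1))^z satisfies G_n^{(z)} = Σ_{i=0}^{n} C(z+i-1, i) C(z+n, n-i) 2^i n! Σ_{j=0}^{i} C(i,j) (-1)^j j! * S(n+i+j, j)/(n+i+j)!, where S denotes Stirling numbers of the second kind. -/

import Mathlib

/-!
Let `G = 2 (eˣ - 1 - x) / x²`, so that `H = G⁻¹`. Substituting `u = 1 - G` into
`(1 - X)⁻ᶻ = ∑ₖ multichoose z k Xᵏ` gives `[xⁿ] Hᶻ = ∑_{k ≤ n} multichoose z k [xⁿ] (1 - G)ᵏ`;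
expanding `(1 - G)ᵏ` binomially and summing over `k` with the hockey-stick identity turns the
weight of `[xⁿ] (-G)ⁱ` into `C(z+i-1, i) C(z+n, n-i)`. Finally `x²ⁱ (-G)ⁱ = 2ⁱ (x - (eˣ - 1))ⁱ`,
and `m! [xᵐ] (eˣ - 1)ʲ = j! S(m, j)` because `D (eˣ - 1)ʲ⁺¹ = (j + 1) ((eˣ - 1)ʲ⁺¹ + (eˣ - 1)ʲ)`
is the Stirling recurrence in disguise.
-/

open PowerSeries Finset

/-- Stirling numbers of the second kind. -/
def stirling : ℕ → ℕ → ℕ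
  | 0, 0 => 1
  | 0, _ + 1 => 0
  | _ + 1, 0 => 0
  | p + 1, q + 1 => (q + 1) * stirling p (q + 1) + stirling p q

open scoped Nat

section ExpSubOnePow

variable {A : Type*} [CommRing A] [Algebra ℚ A]

theorem derivative_exp_sub_one_pow_succ (j : ℕ) :
    d⁄dX A ((exp A - 1) ^ (j + 1)) =
      C ((j : A) + 1) * ((exp A - 1) ^ (j + 1) + (exp A - 1) ^ j) := by
  rw [derivative_pow, map_sub, derivative_exp, derivative_one, map_add, map_natCast, map_one]
  push_cast
  ring

theorem factorial_mul_coeff_exp_sub_one_pow (m j : ℕ) :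
    (m ! : A) * coeff m ((exp A - 1) ^ j) = j ! * stirling m j := by
  induction m generalizing j with
  | zero => cases j <;> simp [stirling]
  | succ m ih =>
    cases j with
    | zero => simp [stirling, coeff_one]
    | succ k =>
      calc ((m + 1) ! : A) * coeff (m + 1) ((exp A - 1) ^ (k + 1))
          = m ! * coeff m (d⁄dX A ((exp A - 1) ^ (k + 1))) := by
            rw [coeff_derivative, Nat.factorial_succ]; push_cast; ring
        _ = (k + 1) * (m ! * coeff m ((exp A - 1) ^ (k + 1)) +
              m ! * coeff m ((exp A - 1) ^ k)) := by
            rw [derivative_exp_sub_one_pow_succ, coeff_C_mul, map_add]; ring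
        _ = (k + 1) ! * stirling (m + 1) (k + 1) := by
            rw [ih, ih, stirling, Nat.factorial_succ]; push_cast; ring

end ExpSubOnePow

theorem coeff_exp_sub_one_pow (m j : ℕ) :
    coeff m ((exp ℚ - 1) ^ j) = (j ! : ℚ) * stirling m j / m ! := by
  rw [eq_div_iff (by positivity), mul_comm, factorial_mul_coeff_exp_sub_one_pow]

namespace Nat

theorem multichoose_mul_choose {z k i : ℕ} (hik : i ≤ k) :
    z.multichoose k * k.choose i = z.multichoose i * (z + i).multichoose (k - i) := by
  cases z with
  | zero =>
    rcases i with _ | j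
    · simp
    · obtain ⟨l, rfl⟩ : ∃ l, k = l + 1 := ⟨k - 1, by omega⟩
      simp [multichoose_zero_succ]
  | succ w =>
    rw [multichoose_eq, multichoose_eq, multichoose_eq, show w + 1 + k - 1 = w + k by omega,
      show w + 1 + i - 1 = w + i by omega, show w + 1 + i + (k - i) - 1 = w + k by omega]
    calc (w + k).choose k * k.choose i
        = (w + k).choose i * (w + k - i).choose w := by
          rw [choose_mul hik, choose_symm_of_eq_add (show w + k - i = (k - i) + w by omega)]
      _ = (w + k).choose (w + i) * (w + i).choose i := by
          rw [choose_mul (show i ≤ w + i by omega), Nat.add_sub_cancel]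
      _ = (w + i).choose i * (w + k).choose (k - i) := by
          rw [mul_comm, choose_symm_of_eq_add (show w + k = (w + i) + (k - i) by omega)]

theorem sum_range_multichoose_mul_choose {z n i : ℕ} (hin : i ≤ n) :
    ∑ k ∈ range (n + 1), z.multichoose k * k.choose i =
      z.multichoose i * (z + n).choose (n - i) := by
  rw [show n + 1 = i + (n - i + 1) by omega, sum_range_add,
    sum_eq_zero fun k hk => by rw [Nat.choose_eq_zero_of_lt (mem_range.mp hk), mul_zero], zero_add]
  simp only [multichoose_mul_choose (le_add_right i _), Nat.add_sub_cancel_left, ← mul_sum,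
    sum_range_multichoose]
  rw [show n - i + (z + i) = z + n by omega,
    choose_symm_of_eq_add (show z + n = (z + i) + (n - i) by omega)]

end Nat

namespace PowerSeries

variable {R : Type*} [CommRing R]

theorem coeff_pow_eq_zero_of_lt {u : R⟦X⟧} (hu : constantCoeff u = 0) {n k : ℕ} (hnk : n < k) :
    coeff n (u ^ k) = 0 :=
  X_pow_dvd_iff.mp (pow_dvd_pow_of_dvd (X_dvd_iff.mpr hu) k) n hnk

theorem coeff_subst_eq_sum_range {u : R⟦X⟧} (hu : constantCoeff u = 0) (f : R⟦X⟧) (n : ℕ) :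
    coeff n (f.subst u) = ∑ k ∈ range (n + 1), coeff k f * coeff n (u ^ k) := by
  rw [coeff_subst' (HasSubst.of_constantCoeff_zero' hu)]
  refine finsum_eq_sum_of_support_subset _ fun k hk => ?_
  by_contra hkn
  simp only [coe_range, Set.mem_Iio, not_lt] at hkn
  exact hk (by simp only [coeff_pow_eq_zero_of_lt hu (show n < k by omega), smul_zero])

theorem mk_multichoose_mul_one_sub_X_pow (z : ℕ) :
    (mk fun k => (z.multichoose k : R)) * (1 - X) ^ z = 1 := by
  cases z with
  | zero =>
    ext k
    cases k <;> simp [coeff_one]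
  | succ d =>
    convert mk_add_choose_mul_one_sub_pow_eq_one R d using 3
    funext k
    rw [Nat.multichoose_eq, add_right_comm, add_tsub_cancel_right, Nat.choose_symm_add]

theorem coeff_pow_of_one_sub_mul_eq_one {u H : R⟦X⟧} (hu : constantCoeff u = 0)
    (hH : (1 - u) * H = 1) (z n : ℕ) :
    coeff n (H ^ z) = ∑ k ∈ range (n + 1), (z.multichoose k : R) * coeff n (u ^ k) := by
  set A : R⟦X⟧ := mk fun k => (z.multichoose k : R)
  have hsubst := HasSubst.of_constantCoeff_zero' hu
  have hinv : A.subst u * (1 - u) ^ z = 1 := by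
    simpa [← coe_substAlgHom hsubst, substAlgHom_X] using
      congrArg (substAlgHom hsubst) (mk_multichoose_mul_one_sub_X_pow (R := R) z)
  have hHz : H ^ z = A.subst u :=
    calc H ^ z = A.subst u * ((1 - u) * H) ^ z := by rw [mul_pow, ← mul_assoc, hinv, one_mul]
      _ = A.subst u := by rw [hH, one_pow, mul_one]
  rw [hHz, coeff_subst_eq_sum_range hu]
  simp only [A, coeff_mk]

theorem coeff_pow_of_mul_eq_one {G H : R⟦X⟧} (hG : constantCoeff G = 1) (hGH : G * H = 1)
    (z n : ℕ) :
    coeff n (H ^ z) =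
      ∑ i ∈ range (n + 1), (z.multichoose i * (z + n).choose (n - i) : R) * coeff n ((-G) ^ i) := by
  have hu : constantCoeff (1 - G) = 0 := by rw [map_sub, map_one, hG, sub_self]
  rw [coeff_pow_of_one_sub_mul_eq_one hu (by rwa [sub_sub_cancel]) z n]
  calc ∑ k ∈ range (n + 1), (z.multichoose k : R) * coeff n ((1 - G) ^ k)
      = ∑ k ∈ range (n + 1), ∑ i ∈ range (n + 1),
          (z.multichoose k * k.choose i : R) * coeff n ((-G) ^ i) := by
        refine sum_congr rfl fun k hk => ?_
        rw [sub_eq_neg_add, add_pow, map_sum, mul_sum]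
        refine sum_subset (range_subset_range.mpr (by simpa using hk)) (fun i _ hi => ?_)
          |>.trans (sum_congr rfl fun i _ => ?_)
        · rw [Nat.choose_eq_zero_of_lt (by simpa using hi)]; simp
        · rw [one_pow, mul_one, ← map_natCast (C (R := R)), coeff_mul_C]; ring
    _ = _ := by
        rw [sum_comm]
        refine sum_congr rfl fun i hi => ?_
        have hsum := congrArg (Nat.cast (R := R))
          (Nat.sum_range_multichoose_mul_choose (z := z) (Nat.lt_succ_iff.mp (mem_range.mp hi)))
        push_cast at hsum
        rw [← sum_mul, hsum]

end PowerSeries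

/-- The series `G = 2 (eˣ - 1 - x) / x²`. -/
noncomputable def expTail : ℚ⟦X⟧ := mk fun m => 2 / (m + 2)!

theorem X_sq_mul_expTail : X ^ 2 * expTail = C 2 * (exp ℚ - X - 1) := by
  ext m
  rw [coeff_X_pow_mul', coeff_C_mul, map_sub, map_sub, coeff_exp, coeff_X, coeff_one]
  rcases m with _ | _ | m
  · simp
  · simp
  · simp [expTail, div_eq_mul_inv]

theorem constantCoeff_expTail : constantCoeff expTail = 1 := by
  simp [expTail, ← coeff_zero_eq_constantCoeff_apply]

theorem expTail_mul_eq_one {H : ℚ⟦X⟧} (hH : (exp ℚ - X - 1) * H = C (1 / 2) * X ^ 2) :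
    expTail * H = 1 := by
  refine mul_left_cancel₀ (pow_ne_zero 2 X_ne_zero) ?_
  calc X ^ 2 * (expTail * H) = C 2 * ((exp ℚ - X - 1) * H) := by
        rw [← mul_assoc, X_sq_mul_expTail, mul_assoc]
    _ = X ^ 2 * 1 := by rw [hH, ← mul_assoc, ← map_mul]; norm_num

theorem coeff_neg_expTail_pow (n i : ℕ) :
    coeff n ((-expTail) ^ i) = 2 ^ i * ∑ j ∈ range (i + 1),
      (i.choose j : ℚ) * (-1) ^ j * j ! * stirling (n + i + j) j / (n + i + j)! := by
  have hsq : X ^ (2 * i) * (-expTail) ^ i = C (2 ^ i) * ((1 - exp ℚ) + X) ^ i := by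
    rw [pow_mul, ← mul_pow, mul_neg, X_sq_mul_expTail, map_pow, ← mul_pow]
    ring
  rw [← coeff_X_pow_mul ((-expTail) ^ i) (2 * i) n, hsq, coeff_C_mul, add_pow, map_sum]
  congr 1
  refine sum_congr rfl fun j hj => ?_
  have hji : j ≤ i := Nat.lt_succ_iff.mp (mem_range.mp hj)
  have hsign : (1 - exp ℚ) ^ j = C ((-1) ^ j) * (exp ℚ - 1) ^ j := by
    rw [← neg_sub, neg_pow, map_pow, map_neg, map_one]
  rw [hsign, ← map_natCast (C (R := ℚ)), coeff_mul_C, mul_assoc, coeff_C_mul, coeff_mul_X_pow',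
    if_pos (by omega), show n + 2 * i - (i - j) = n + i + j by omega, coeff_exp_sub_one_pow]
  ring

/-- The coefficient `G_n^{(z)}` of `x^n/n!` in `((1/2)x²/(e^x - x - 1))^z` equals
`Σ_{i=0}^{n} C(z+i-1,i) C(z+n,n-i) 2^i n! Σ_{j=0}^{i} C(i,j)(-1)^j j! S(n+i+j,j)/(n+i+j)!`. -/
theorem potential_polynomial_stirling (z : ℕ) (H : PowerSeries ℚ)
    (hH : (PowerSeries.exp ℚ - PowerSeries.X - 1) * H =
      PowerSeries.C (R := ℚ) (1 / 2) * PowerSeries.X ^ 2)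
    (n : ℕ) :
    (n.factorial : ℚ) * PowerSeries.coeff (R := ℚ) n (H ^ z) =
      ∑ i ∈ Finset.range (n + 1),
        ((z + i - 1).choose i : ℚ) * ((z + n).choose (n - i) : ℚ) * 2 ^ i * (n.factorial : ℚ) *
          ∑ j ∈ Finset.range (i + 1),
            (i.choose j : ℚ) * (-1) ^ j * (j.factorial : ℚ) *
              (stirling (n + i + j) j : ℚ) / ((n + i + j).factorial : ℚ) := by
  rw [coeff_pow_of_mul_eq_one constantCoeff_expTail (expTail_mul_eq_one hH), mul_sum]
  refine sum_congr rfl fun i _ => ?_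
  rw [coeff_neg_expTail_pow, ← Nat.multichoose_eq]
  ring
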